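/- arXiv:1506.04573 — 3 statements merged into one kernel-verified Lean document; each statement's English description precedes it below -/
import Mathlib

section
/- For any domain P on X × Y with Y = {−1,1} and marginal D on X, and any posterior distribution Q on a set H of measurable classifiers, the Gibbs risk decomposes exactly as: R_P(G_Q) = (1/2)·d_D(Q) + e_P(Q). -/
/-!
STATEMENT 10: Exact decomposition of the Gibbs risk
`R_P(G_Q) = (1/2) d_D(Q) + e_P(Q)` (Equation (5) of the paper), where `D` is the
marginal of `P` on `X`.  `Y = {-1,1}` is encoded as `Bool`; voters are indexed
by a measurable space `Ω` through the evaluation map `ev`.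
-/

open MeasureTheory Real
open scoped ENNReal Classical

noncomputable section

section Aux

variable {α : Type*} [MeasurableSpace α]

lemma meas_ne_bool {f g : α → Bool} (hf : Measurable f) (hg : Measurable g) :
    MeasurableSet {a | f a ≠ g a} := by
  have h : {a | f a ≠ g a}
      = (f ⁻¹' {true} ∩ g ⁻¹' {false}) ∪ (f ⁻¹' {false} ∩ g ⁻¹' {true}) := by
    ext a; cases hfa : f a <;> cases hga : g a <;> simp [hfa, hga]
  rw [h]
  exact ((hf trivial).inter (hg trivial)).union ((hf trivial).inter (hg trivial))

lemma integrable_ind {μ : Measure α} [IsFiniteMeasure μ] {s : Set α} (hs : MeasurableSet s) :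
    Integrable (fun a => if a ∈ s then (1:ℝ) else 0) μ := by
  have h : (fun a => if a ∈ s then (1:ℝ) else 0) = s.indicator (fun _ => 1) := by
    ext a; by_cases h : a ∈ s <;> simp [h]
  rw [h]; exact (integrable_const 1).indicator hs

lemma abs_int_le (μ : Measure α) [IsProbabilityMeasure μ] {u : α → ℝ}
    (h : ∀ b, |u b| ≤ 1) : |∫ b, u b ∂μ| ≤ 1 := by
  have h' : ∀ᵐ b ∂μ, ‖u b‖ ≤ 1 :=
    Filter.Eventually.of_forall fun b => by simpa [Real.norm_eq_abs] using h b
  have := norm_integral_le_of_norm_le_const (μ := μ) (f := u) (C := 1) h'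
  simpa [Real.norm_eq_abs] using this

lemma bool_ident (a b c : Bool) :
    (if a ≠ b then (1:ℝ) else 0)
      = ((if a ≠ c then 1 else 0) + (if b ≠ c then 1 else 0))
        - (2 * (if a ≠ c then (1:ℝ) else 0)) * (if b ≠ c then 1 else 0) := by
  cases a <;> cases b <;> cases c <;> norm_num

end Aux

theorem gibbs_risk_decomposition
    {X : Type*} [MeasurableSpace X] {Ω : Type*} [MeasurableSpace Ω]
    (ev : Ω → X → Bool) (hev : Measurable (Function.uncurry ev))
    (P : Measure (X × Bool)) [IsProbabilityMeasure P]
    (Q : Measure Ω) [IsProbabilityMeasure Q] :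
    ∫ z, ∫ h, (if ev h z.1 ≠ z.2 then (1 : ℝ) else 0) ∂Q ∂P
      = (1 / 2) * (∫ x, ∫ h, ∫ h',
            (if ev h x ≠ ev h' x then (1 : ℝ) else 0) ∂Q ∂Q ∂(P.map Prod.fst))
        + ∫ z, ∫ h, ∫ h',
            (if ev h z.1 ≠ z.2 ∧ ev h' z.1 ≠ z.2 then (1 : ℝ) else 0) ∂Q ∂Q ∂P := by
  classical
  set f : X × Bool → Ω → ℝ := fun z h => if ev h z.1 ≠ z.2 then 1 else 0 with hfdef
  set p : X × Bool → ℝ := fun z => ∫ h, f z h ∂Q with hpdef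
  set g : X → ℝ :=
    fun x => ∫ h, ∫ h', (if ev h x ≠ ev h' x then (1 : ℝ) else 0) ∂Q ∂Q with hgdef
  set k : X × Bool → ℝ :=
    fun z => ∫ h, ∫ h',
      (if ev h z.1 ≠ z.2 ∧ ev h' z.1 ≠ z.2 then (1 : ℝ) else 0) ∂Q ∂Q with hkdef
  -- basic measurability
  have hev1 : ∀ x : X, Measurable (fun h : Ω => ev h x) := fun x =>
    hev.comp (measurable_id.prodMk measurable_const)
  have hmeasf : ∀ z : X × Bool, MeasurableSet {h : Ω | ev h z.1 ≠ z.2} := fun z =>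
    meas_ne_bool (hev1 z.1) measurable_const
  have hintf : ∀ z : X × Bool, Integrable (f z) Q := by
    intro z
    have h : f z = ({h : Ω | ev h z.1 ≠ z.2}).indicator (fun _ => (1:ℝ)) := by
      funext a
      by_cases hh : ev a z.1 ≠ z.2 <;>
        simp [hfdef, Set.indicator_apply, Set.mem_setOf_eq, hh]
    rw [h]; exact (integrable_const 1).indicator (hmeasf z)
  -- pointwise key identity
  have key : ∀ z : X × Bool, (1 / 2) * g z.1 + k z = p z := by
    intro z
    have h1 : ∀ h : Ω, (∫ h', (if ev h z.1 ≠ ev h' z.1 then (1:ℝ) else 0) ∂Q)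
        = (f z h + p z) - (2 * f z h) * p z := by
      intro h
      have he : (fun h' => (if ev h z.1 ≠ ev h' z.1 then (1:ℝ) else 0))
          = fun h' => (f z h + f z h') - (2 * f z h) * f z h' := by
        funext h'
        simpa [hfdef] using bool_ident (ev h z.1) (ev h' z.1) z.2
      have i1 : Integrable (fun _ : Ω => f z h) Q := integrable_const _
      have i2 : Integrable (fun h' : Ω => f z h + f z h') Q := i1.add (hintf z)
      have i3 : Integrable (fun h' : Ω => (2 * f z h) * f z h') Q := (hintf z).const_mul _
      rw [he, integral_sub i2 i3, integral_add i1 (hintf z), integral_const,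
        integral_const_mul]
      simp [hpdef]
    have hg1 : g z.1 = (p z + p z) - 2 * (p z * p z) := by
      have : g z.1 = ∫ h, ((f z h + p z) - (2 * f z h) * p z) ∂Q := by
        rw [hgdef]; exact integral_congr_ae (Filter.Eventually.of_forall h1)
      rw [this]
      have hre : (fun h => (f z h + p z) - (2 * f z h) * p z)
          = fun h => (f z h + p z) - f z h * (2 * p z) := by funext h; ring
      have i1 : Integrable (fun _ : Ω => p z) Q := integrable_const _
      have i2 : Integrable (fun h : Ω => f z h + p z) Q := (hintf z).add i1
      have i3 : Integrable (fun h : Ω => f z h * (2 * p z)) Q := (hintf z).mul_const _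
      rw [hre, integral_sub i2 i3, integral_add (hintf z) i1, integral_const,
        integral_mul_const]
      simp [hpdef]; ring
    have hk1 : k z = p z * p z := by
      have h2 : ∀ h : Ω,
          (∫ h', (if ev h z.1 ≠ z.2 ∧ ev h' z.1 ≠ z.2 then (1:ℝ) else 0) ∂Q)
          = f z h * p z := by
        intro h
        have he : (fun h' => (if ev h z.1 ≠ z.2 ∧ ev h' z.1 ≠ z.2 then (1:ℝ) else 0))
            = fun h' => f z h * f z h' := by
          funext h'
          by_cases hA : ev h z.1 ≠ z.2 <;> by_cases hB : ev h' z.1 ≠ z.2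
          · simp [hfdef, hA, hB]
          · simp [hfdef, hA, hB, not_not.1 hB]
          · simp [hfdef, hA, hB, not_not.1 hA]
          · simp [hfdef, hA, hB, not_not.1 hA, not_not.1 hB]
        rw [he, integral_const_mul]
      have : k z = ∫ h, f z h * p z ∂Q := by
        rw [hkdef]; exact integral_congr_ae (Filter.Eventually.of_forall h2)
      rw [this, integral_mul_const]
    rw [hg1, hk1]; ring
  -- measurability of g and k
  have hF2 : StronglyMeasurable (fun q : (X × Ω) × Ω =>
      (if ev q.1.2 q.1.1 ≠ ev q.2 q.1.1 then (1:ℝ) else 0)) := by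
    have hs : MeasurableSet {q : (X × Ω) × Ω | ev q.1.2 q.1.1 ≠ ev q.2 q.1.1} :=
      meas_ne_bool (hev.comp ((measurable_fst.snd).prodMk measurable_fst.fst))
        (hev.comp (measurable_snd.prodMk measurable_fst.fst))
    exact ((measurable_const.ite hs measurable_const)).stronglyMeasurable
  have hgm : StronglyMeasurable g := by
    have h1 : StronglyMeasurable (fun q : X × Ω =>
        ∫ h', (if ev q.2 q.1 ≠ ev h' q.1 then (1:ℝ) else 0) ∂Q) :=
      hF2.integral_prod_right'
    exact h1.integral_prod_right'
  have hK2 : StronglyMeasurable (fun q : ((X × Bool) × Ω) × Ω =>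
      (if ev q.1.2 q.1.1.1 ≠ q.1.1.2 ∧ ev q.2 q.1.1.1 ≠ q.1.1.2 then (1:ℝ) else 0)) := by
    have hs1 : MeasurableSet {q : ((X × Bool) × Ω) × Ω | ev q.1.2 q.1.1.1 ≠ q.1.1.2} :=
      meas_ne_bool (hev.comp ((measurable_fst.snd).prodMk measurable_fst.fst.fst))
        measurable_fst.fst.snd
    have hs2 : MeasurableSet {q : ((X × Bool) × Ω) × Ω | ev q.2 q.1.1.1 ≠ q.1.1.2} :=
      meas_ne_bool (hev.comp (measurable_snd.prodMk measurable_fst.fst.fst))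
        measurable_fst.fst.snd
    exact ((measurable_const.ite (hs1.inter hs2) measurable_const)).stronglyMeasurable
  have hkm : StronglyMeasurable k := by
    have h1 : StronglyMeasurable (fun q : (X × Bool) × Ω =>
        ∫ h', (if ev q.2 q.1.1 ≠ q.1.2 ∧ ev h' q.1.1 ≠ q.1.2 then (1:ℝ) else 0) ∂Q) :=
      hK2.integral_prod_right'
    exact h1.integral_prod_right'
  -- boundedness and integrability
  have hgb : ∀ x, |g x| ≤ 1 := fun x =>
    abs_int_le Q fun h => abs_int_le Q fun h' => by split <;> norm_num
  have hkb : ∀ z, |k z| ≤ 1 := fun z =>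
    abs_int_le Q fun h => abs_int_le Q fun h' => by split <;> norm_num
  have hintg : Integrable (fun z : X × Bool => g z.1) P :=
    Integrable.mono' (integrable_const 1)
      ((hgm.comp_measurable measurable_fst).aestronglyMeasurable)
      (Filter.Eventually.of_forall fun z => by simpa using hgb z.1)
  have hintk : Integrable k P :=
    Integrable.mono' (integrable_const 1) hkm.aestronglyMeasurable
      (Filter.Eventually.of_forall fun z => by simpa using hkb z)
  -- push the map and combine
  have hmap : (∫ x, ∫ h, ∫ h',
        (if ev h x ≠ ev h' x then (1 : ℝ) else 0) ∂Q ∂Q ∂(P.map Prod.fst))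
      = ∫ z, g z.1 ∂P :=
    integral_map measurable_fst.aemeasurable hgm.aestronglyMeasurable
  rw [hmap]
  calc ∫ z, ∫ h, (if ev h z.1 ≠ z.2 then (1 : ℝ) else 0) ∂Q ∂P
      = ∫ z, ((1 / 2) * g z.1 + k z) ∂P := by
        refine integral_congr_ae (Filter.Eventually.of_forall fun z => ?_)
        exact (key z).symm
    _ = (1 / 2) * ∫ z, g z.1 ∂P + ∫ z, k z ∂P := by
        have i1 : Integrable (fun z : X × Bool => (1 / 2 : ℝ) * g z.1) P :=
          hintg.const_mul _
        rw [integral_add i1 hintk, integral_const_mul]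
end
end

section
/- Let P_S and P_T be domains on X × Y with Y = {−1,1}, and let A ⊆ X × Y be a measurable set with P_S(Aᶜ) = 0 such that the restriction of P_T to A is absolutely continuous with respect to P_S with density ρ. For q > 1, let β_q = (∫ ρ^q dP_S)^{1/q} and let η_Q = E_{(x,y)∼P_T} 1[(x,y) ∈ Aᶜ] · E_{h∼Q} E_{h'∼Q} 1[h(x) ≠ y]·1[h'(x) ≠ y]. Then for every posterior Q on H: e_{P_T}(Q) ≤ β_q · ( e_{P_S}(Q) )^{1−1/q} + η_Q. -/
/-!
Write `G z = Q{h : h errs at z}²`, the joint error of `Q` at the point `z`, so that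
`e_P(Q) = ∫ G dP` and `0 ≤ G ≤ 1`. Split `e_{P_T}(Q)` along `A` and `Aᶜ`: the `Aᶜ` part is `η_Q`,
and on `A` the density gives `∫ ρ G dP_S`, which Hölder with exponents `q` and `q'` bounds by
`β_q ‖G‖_{q'}`. Since `G ≤ 1` we have `G^{q'} ≤ G`, hence `‖G‖_{q'} ≤ e_{P_S}(Q)^{1/q'}`, and
`1/q' = 1 - 1/q`.

`Y = {-1,1}` is encoded as `Bool`, and voters are indexed by a measurable space `Ω` through the
jointly measurable evaluation map `ev`. The inequality is stated in `ℝ≥0∞`, so that an infinite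
`β_q` gives a vacuous bound.
-/

open MeasureTheory Real
open scoped ENNReal Classical

noncomputable section

theorem integral_integral_ite_and {Ω : Type*} [MeasurableSpace Ω] (Q : Measure Ω)
    [IsFiniteMeasure Q] {p : Ω → Prop} [DecidablePred p] (hp : MeasurableSet {h | p h}) :
    ∫ h, ∫ h', (if p h ∧ p h' then (1 : ℝ) else 0) ∂Q ∂Q = Q.real {h | p h} ^ 2 := by
  have hinner : ∀ h, ∫ h', (if p h ∧ p h' then (1 : ℝ) else 0) ∂Q
      = {h | p h}.indicator (fun _ => Q.real {h | p h}) h := by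
    intro h
    by_cases hh : p h
    · simp [hh, ← integral_indicator_one hp, Set.indicator_apply]
    · simp [hh]
  simp [hinner, integral_indicator hp, sq]

theorem ofReal_integral_toReal {α : Type*} [MeasurableSpace α] {μ : Measure α}
    {g : α → ℝ≥0∞} (hg : AEMeasurable g μ) (hfin : ∫⁻ x, g x ∂μ ≠ ∞) :
    ENNReal.ofReal (∫ x, (g x).toReal ∂μ) = ∫⁻ x, g x ∂μ := by
  rw [integral_toReal hg (ae_lt_top' hg hfin), ENNReal.ofReal_toReal hfin]

theorem lintegral_mul_le_Lp_mul_lintegral_rpow_of_le_one {α : Type*} [MeasurableSpace α]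
    (μ : Measure α) {p : ℝ} (hp : 1 < p) {f g : α → ℝ≥0∞} (hf : AEMeasurable f μ)
    (hg : AEMeasurable g μ) (hg1 : ∀ x, g x ≤ 1) :
    ∫⁻ x, f x * g x ∂μ ≤ (∫⁻ x, f x ^ p ∂μ) ^ (1 / p) * (∫⁻ x, g x ∂μ) ^ (1 - 1 / p) := by
  have hpq : p.HolderConjugate p.conjExponent := .conjExponent hp
  have hgpow : ∫⁻ x, g x ^ p.conjExponent ∂μ ≤ ∫⁻ x, g x ∂μ :=
    lintegral_mono fun x => (ENNReal.rpow_le_rpow_of_exponent_ge (hg1 x) hpq.symm.lt.le).trans_eq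
      (ENNReal.rpow_one _)
  have hexp : 1 - 1 / p = 1 / p.conjExponent := by rw [one_div, one_div, hpq.one_sub_inv]
  calc ∫⁻ x, f x * g x ∂μ
      ≤ (∫⁻ x, f x ^ p ∂μ) ^ (1 / p) * (∫⁻ x, g x ^ p.conjExponent ∂μ) ^ (1 / p.conjExponent) :=
        ENNReal.lintegral_mul_le_Lp_mul_Lq μ hpq hf hg
    _ ≤ (∫⁻ x, f x ^ p ∂μ) ^ (1 / p) * (∫⁻ x, g x ∂μ) ^ (1 - 1 / p) := by
        rw [hexp]
        gcongr
        exact one_div_nonneg.mpr hpq.symm.nonneg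

theorem measurable_measure_setOf_apply_ne {X Ω : Type*} [MeasurableSpace X] [MeasurableSpace Ω]
    {ev : Ω → X → Bool} (hev : Measurable (Function.uncurry ev)) (Q : Measure Ω) [SFinite Q] :
    Measurable fun z : X × Bool => Q {h | ev h z.1 ≠ z.2} := by
  have hs : MeasurableSet {w : (X × Bool) × Ω | ev w.2 w.1.1 ≠ w.1.2} :=
    measurableSet_setOfPred.mpr (by fun_prop)
  exact measurable_measure_prodMk_left hs

theorem holder_step_general
    {X : Type*} [MeasurableSpace X] {Ω : Type*} [MeasurableSpace Ω]
    (ev : Ω → X → Bool) (hev : Measurable (Function.uncurry ev))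
    (PS PT : Measure (X × Bool)) [IsProbabilityMeasure PS] [IsProbabilityMeasure PT]
    (A : Set (X × Bool)) (hA : MeasurableSet A)
    (ρ : X × Bool → ℝ≥0∞) (hρ : Measurable ρ)
    (hdens : PT.restrict A = PS.withDensity ρ)
    (q : ℝ) (hq : 1 < q)
    (Q : Measure Ω) [IsProbabilityMeasure Q] :
    -- e_{P_T}(Q) ≤ β_q (e_{P_S}(Q))^{1-1/q} + η_Q
    ENNReal.ofReal (∫ z, ∫ h, ∫ h',
        (if ev h z.1 ≠ z.2 ∧ ev h' z.1 ≠ z.2 then (1 : ℝ) else 0) ∂Q ∂Q ∂PT)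
      ≤ (∫⁻ z, ρ z ^ q ∂PS) ^ (1 / q)
          * ENNReal.ofReal ((∫ z, ∫ h, ∫ h',
              (if ev h z.1 ≠ z.2 ∧ ev h' z.1 ≠ z.2 then (1 : ℝ) else 0) ∂Q ∂Q ∂PS)
            ^ (1 - 1 / q))
        + ENNReal.ofReal (∫ z, (if z ∈ Aᶜ then (1 : ℝ) else 0) * ∫ h, ∫ h',
            (if ev h z.1 ≠ z.2 ∧ ev h' z.1 ≠ z.2 then (1 : ℝ) else 0) ∂Q ∂Q ∂PT) := by
  set G : X × Bool → ℝ≥0∞ := fun z => Q {h | ev h z.1 ≠ z.2} ^ 2 with hG_def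
  have hG : Measurable G := (measurable_measure_setOf_apply_ne hev Q).pow_const 2
  have hG1 : ∀ z, G z ≤ 1 := fun z => pow_le_one₀ bot_le prob_le_one
  have hinner : ∀ z : X × Bool, ∫ h, ∫ h',
      (if ev h z.1 ≠ z.2 ∧ ev h' z.1 ≠ z.2 then (1 : ℝ) else 0) ∂Q ∂Q = (G z).toReal := by
    intro z
    rw [integral_integral_ite_and Q (measurableSet_setOfPred.mpr (by fun_prop)), hG_def,
      ENNReal.toReal_pow, measureReal_def]
  have hlint : ∀ (μ : Measure (X × Bool)) [IsFiniteMeasure μ],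
      ENNReal.ofReal (∫ z, (G z).toReal ∂μ) = ∫⁻ z, G z ∂μ := fun μ _ =>
    ofReal_integral_toReal hG.aemeasurable
      (ne_top_of_le_ne_top (by simp [measure_ne_top]) (lintegral_mono hG1))
  have heta : ∀ z, (if z ∈ Aᶜ then (1 : ℝ) else 0) * (G z).toReal
      = Aᶜ.indicator (fun z => (G z).toReal) z := by
    intro z
    by_cases hz : z ∈ Aᶜ <;> simp [hz]
  simp only [hinner, heta]
  rw [integral_indicator hA.compl, hlint, ← ENNReal.ofReal_rpow_of_nonneg, hlint, hlint,
    ← lintegral_add_compl G hA]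
  · gcongr
    calc ∫⁻ z in A, G z ∂PT = ∫⁻ z, ρ z * G z ∂PS := by
          rw [hdens, lintegral_withDensity_eq_lintegral_mul _ hρ hG]; rfl
      _ ≤ _ := lintegral_mul_le_Lp_mul_lintegral_rpow_of_le_one PS hq hρ.aemeasurable
          hG.aemeasurable hG1
  · exact integral_nonneg fun z => ENNReal.toReal_nonneg
  · exact sub_nonneg.mpr ((div_le_one (by linarith)).mpr hq.le)

theorem holder_step
    {X : Type*} [MeasurableSpace X] {Ω : Type*} [MeasurableSpace Ω]
    (ev : Ω → X → Bool) (hev : Measurable (Function.uncurry ev))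
    (PS PT : Measure (X × Bool)) [IsProbabilityMeasure PS] [IsProbabilityMeasure PT]
    (A : Set (X × Bool)) (hA : MeasurableSet A) (hSA : PS Aᶜ = 0)
    (ρ : X × Bool → ℝ≥0∞) (hρ : Measurable ρ)
    (hdens : PT.restrict A = PS.withDensity ρ)
    (q : ℝ) (hq : 1 < q)
    (Q : Measure Ω) [IsProbabilityMeasure Q] :
    -- e_{P_T}(Q) ≤ β_q (e_{P_S}(Q))^{1-1/q} + η_Q
    ENNReal.ofReal (∫ z, ∫ h, ∫ h',
        (if ev h z.1 ≠ z.2 ∧ ev h' z.1 ≠ z.2 then (1 : ℝ) else 0) ∂Q ∂Q ∂PT)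
      ≤ (∫⁻ z, ρ z ^ q ∂PS) ^ (1 / q)
          * ENNReal.ofReal ((∫ z, ∫ h, ∫ h',
              (if ev h z.1 ≠ z.2 ∧ ev h' z.1 ≠ z.2 then (1 : ℝ) else 0) ∂Q ∂Q ∂PS)
            ^ (1 - 1 / q))
        + ENNReal.ofReal (∫ z, (if z ∈ Aᶜ then (1 : ℝ) else 0) * ∫ h, ∫ h',
            (if ev h z.1 ≠ z.2 ∧ ev h' z.1 ≠ z.2 then (1 : ℝ) else 0) ∂Q ∂Q ∂PT) :=
  holder_step_general ev hev PS PT A hA ρ hρ hdens q hq Q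
end
end

section
/- Let Φ(a) = γ([a, ∞)) where γ is the standard one-dimensional Gaussian measure on ℝ. Let P be a probability measure on ℝ^d × {−1,1} with x ≠ 0 P-almost surely, and let w ∈ ℝ^d. Then the expected joint error of the Gaussian posterior Q_w = N(w, I_d) over linear classifiers satisfies: E_{(x,y)∼P} P_{(w',w'')∼N(w,I_d)⊗N(w,I_d)}( sgn(w'·x) ≠ y and sgn(w''·x) ≠ y ) = E_{(x,y)∼P} [ Φ( y·(w·x)/‖x‖ ) ]². -/
/-!
STATEMENT 17: Expected joint error of the Gaussian posterior over linear
classifiers equals the expected squared probit loss: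
`E_{(x,y)∼P} P_{(w',w'')∼N(w,I_d)⊗N(w,I_d)}(sgn(w'·x) ≠ y ∧ sgn(w''·x) ≠ y)
  = E_{(x,y)∼P} [Φ(y (w·x)/‖x‖)]²`.
`ℝ^d` is `Fin d → ℝ`; `Y = {-1,1}` is `Bool` (`true ↔ +1`); `Φ(a) = γ([a,∞))`.
-/

open MeasureTheory ProbabilityTheory Real
open scoped ENNReal Classical

noncomputable section

/-- Dot product on `ℝ^d`. -/
def dot {d : ℕ} (w x : Fin d → ℝ) : ℝ := ∑ i, w i * x i

/-- Euclidean norm on `ℝ^d`. -/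
def enorm' {d : ℕ} (x : Fin d → ℝ) : ℝ := Real.sqrt (∑ i, x i ^ 2)

/-- Sign, as a Boolean label (`true ↔ +1`). -/
def linSgn (t : ℝ) : Bool := decide (0 < t)

/-- The `±1` real value of a Boolean label. -/
def toPM (b : Bool) : ℝ := if b then 1 else -1

/-- The Gaussian measure `N(w, I_d)` on `ℝ^d`. -/
def gaussPi {d : ℕ} (w : Fin d → ℝ) : Measure (Fin d → ℝ) :=
  Measure.pi fun i => gaussianReal (w i) 1

/-- The standard Gaussian tail function `Φ(a) = γ([a,∞))`. -/
def gaussTail (a : ℝ) : ℝ := (gaussianReal 0 1 (Set.Ici a)).toReal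

/-!
For fixed `x ≠ 0`, the score `w' · x` of `w' ∼ N(w, I_d)` is a sum of independent Gaussians,
hence `N(w · x, ‖x‖²)`. Standardising it, a single draw misclassifies `(x, y)` with probability
`Φ(y (w · x) / ‖x‖)`. The two draws are independent, so the joint error at `(x, y)` is the square
of that probability, and the two integrands agree `P`-almost everywhere.
-/

open scoped NNReal

namespace ProbabilityTheory

lemma pi_gaussianReal_map_sum_mul {ι : Type*} [Fintype ι] (μ : ι → ℝ) (v : ι → ℝ≥0) (c : ι → ℝ) :
    (Measure.pi fun i => gaussianReal (μ i) (v i)).map (fun g => ∑ i, g i * c i)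
      = gaussianReal (∑ i, c i * μ i) (∑ i, .mk (c i ^ 2) (sq_nonneg _) * v i) := by
  have hlin : (fun g : ι → ℝ => ∑ i, g i * c i) = (fun p => ∑ i, p i) ∘ (fun g i => g i * c i) :=
    rfl
  rw [hlin, ← Measure.map_map (by fun_prop) (by fun_prop),
    Measure.pi_map_pi (f := fun i a => a * c i) fun i => by fun_prop]
  simp_rw [gaussianReal_map_mul_const]
  refine Measure.ext_of_charFun (funext fun t => ?_)
  rw [charFun_map_sum_pi_eq_prod, Finset.prod_apply]
  simp_rw [charFun_gaussianReal, ← Complex.exp_sum]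
  congr 1
  push_cast
  simp only [Finset.sum_sub_distrib, Finset.mul_sum, Finset.sum_mul, Finset.sum_div]

lemma gaussianReal_eq_map_const_add_mul (m : ℝ) {v : ℝ≥0} {c : ℝ} (hc : c ^ 2 = v) :
    gaussianReal m v = (gaussianReal 0 1).map (m + c * ·) := by
  rw [show (m + c * ·) = (m + ·) ∘ (c * ·) from rfl,
    ← Measure.map_map (by fun_prop) (by fun_prop), gaussianReal_map_const_mul,
    gaussianReal_map_const_add]
  congr
  · simp
  · ext; simp [hc]

end ProbabilityTheory

lemma gaussianReal_linSgn_ne (y : Bool) (m : ℝ) {v : ℝ≥0} {r : ℝ} (hr : 0 < r) (hv : r ^ 2 = v) :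
    gaussianReal m v {t | linSgn t ≠ y} = gaussianReal 0 1 (Set.Ici (toPM y * m / r)) := by
  cases y with
  | false =>
    have hset : {t | linSgn t ≠ false} = Set.Ioi 0 := by ext; simp [linSgn]
    have hpre : (m + r * ·) ⁻¹' Set.Ioi 0 = Set.Ioi (-m / r) := by
      ext z
      rw [Set.mem_preimage, Set.mem_Ioi, Set.mem_Ioi, div_lt_iff₀ hr]
      constructor <;> intro h <;> linarith
    have := nullSingletonClass_gaussianReal (μ := 0) one_ne_zero
    rw [hset, gaussianReal_eq_map_const_add_mul m hv,
      Measure.map_apply (by fun_prop) measurableSet_Ioi, hpre, measure_congr Ioi_ae_eq_Ici]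
    simp [toPM]
  | true =>
    have hset : {t | linSgn t ≠ true} = Set.Iic 0 := by ext; simp [linSgn]
    have hpre : (m + -r * ·) ⁻¹' Set.Iic 0 = Set.Ici (m / r) := by
      ext z
      rw [Set.mem_preimage, Set.mem_Iic, Set.mem_Ici, div_le_iff₀ hr]
      constructor <;> intro h <;> linarith
    rw [hset, gaussianReal_eq_map_const_add_mul m (c := -r) (by rw [neg_sq, hv]),
      Measure.map_apply (by fun_prop) measurableSet_Iic, hpre]
    simp [toPM]

instance {d : ℕ} (w : Fin d → ℝ) : IsProbabilityMeasure (gaussPi w) := by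
  unfold gaussPi; infer_instance

lemma measurable_linSgn : Measurable linSgn := by
  refine measurable_to_bool ?_
  rw [show linSgn ⁻¹' {true} = Set.Ioi 0 by ext; simp [linSgn]]
  exact measurableSet_Ioi

lemma measurable_dot_left {d : ℕ} (x : Fin d → ℝ) : Measurable (dot · x) := by
  unfold dot; fun_prop

lemma enorm'_pos {d : ℕ} {x : Fin d → ℝ} (hx : x ≠ 0) : 0 < enorm' x := by
  obtain ⟨i, hi⟩ := Function.ne_iff.mp hx
  exact Real.sqrt_pos.mpr <| Finset.sum_pos' (fun i _ => sq_nonneg _)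
    ⟨i, Finset.mem_univ i, pow_two_pos_of_ne_zero hi⟩

lemma gaussPi_map_dot {d : ℕ} (w x : Fin d → ℝ) :
    (gaussPi w).map (dot · x) = gaussianReal (dot w x) (∑ i, x i ^ 2).toNNReal := by
  rw [gaussPi, show (dot · x) = fun g => ∑ i, g i * x i from rfl, pi_gaussianReal_map_sum_mul]
  congr 1
  · simp only [dot, mul_comm]
  · ext; simp [Real.toNNReal_of_nonneg (Finset.sum_nonneg fun i _ => sq_nonneg (x i))]

lemma gaussPi_linSgn_ne {d : ℕ} (w : Fin d → ℝ) {x : Fin d → ℝ} (hx : x ≠ 0) (y : Bool) :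
    gaussPi w {w' | linSgn (dot w' x) ≠ y}
      = gaussianReal 0 1 (Set.Ici (toPM y * dot w x / enorm' x)) := by
  rw [show {w' | linSgn (dot w' x) ≠ y} = (dot · x) ⁻¹' (linSgn ⁻¹' {y}ᶜ) from rfl,
    ← Measure.map_apply (measurable_dot_left x)
    (measurable_linSgn (measurableSet_singleton y).compl), gaussPi_map_dot]
  exact gaussianReal_linSgn_ne y _ (enorm'_pos hx)
    (by rw [enorm', Real.sq_sqrt (by positivity), Real.coe_toNNReal _ (by positivity)])

theorem joint_error_eq_squared_probit_loss_general
    {d : ℕ}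
    (P : Measure ((Fin d → ℝ) × Bool))
    (h0 : ∀ᵐ z ∂P, z.1 ≠ 0)
    (w : Fin d → ℝ) :
    ∫ z, (((gaussPi w).prod (gaussPi w))
        {p | linSgn (dot p.1 z.1) ≠ z.2 ∧ linSgn (dot p.2 z.1) ≠ z.2}).toReal ∂P
      = ∫ z, gaussTail (toPM z.2 * dot w z.1 / enorm' z.1) ^ 2 ∂P := by
  refine integral_congr_ae ?_
  filter_upwards [h0] with ⟨x, y⟩ hx
  have hprod : {p : (Fin d → ℝ) × (Fin d → ℝ) | linSgn (dot p.1 x) ≠ y ∧ linSgn (dot p.2 x) ≠ y}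
      = {w' | linSgn (dot w' x) ≠ y} ×ˢ {w' | linSgn (dot w' x) ≠ y} := rfl
  rw [hprod, Measure.prod_prod, gaussPi_linSgn_ne w hx, ENNReal.toReal_mul, sq]
  rfl

theorem joint_error_eq_squared_probit_loss
    {d : ℕ}
    (P : Measure ((Fin d → ℝ) × Bool)) [IsProbabilityMeasure P]
    (h0 : ∀ᵐ z ∂P, z.1 ≠ 0)
    (w : Fin d → ℝ) :
    ∫ z, (((gaussPi w).prod (gaussPi w))
        {p | linSgn (dot p.1 z.1) ≠ z.2 ∧ linSgn (dot p.2 z.1) ≠ z.2}).toReal ∂P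
      = ∫ z, gaussTail (toPM z.2 * dot w z.1 / enorm' z.1) ^ 2 ∂P :=
  joint_error_eq_squared_probit_loss_general P h0 w
end
end
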